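/- Let Γ > 0 and let e^{At} = e^{-2t/Γ}[[1+2Γ⁻¹t, 4Γ⁻²t],[-t, 1-2Γ⁻¹t]] with B = [[0,0],[0,√(2Γ)]]. Then the (1,1) entry of Σ_t = ∫₀ᵗ e^{A(t-s)} B Bᵀ (e^{A(t-s)})ᵀ ds equals (e^{4t/Γ} - 1 - 4tΓ⁻¹ - 8t²Γ⁻²) e^{-4t/Γ}. -/

import Mathlib

open scoped Matrix

/-!
Since `B Bᵀ = !![0, 0; 0, 2Γ]`, the `(0,0)` entry of the integrand is `2Γ (e^{Au})₀₁² =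
32 Γ⁻³ u² e^{-4u/Γ}` with `u = t - s`, and `∫₀ᵗ u² e^{-cu} du` is elementary (`c = 4/Γ`).
-/

theorem Matrix.mul_mul_transpose_mul_transpose_apply_zero_zero {R : Type*} [CommRing R]
    (M : Matrix (Fin 2) (Fin 2) R) (b : R) :
    (M * !![0, 0; 0, b] * !![0, 0; 0, b]ᵀ * Mᵀ) 0 0 = (b * M 0 1) ^ 2 := by
  simp [Matrix.mul_apply, Fin.sum_univ_two]
  ring

namespace Real

theorem hasDerivAt_sq_mul_exp_neg_antideriv {c : ℝ} (hc : c ≠ 0) (u : ℝ) :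
    HasDerivAt (fun u => -exp (-(c * u)) * (u ^ 2 / c + 2 * u / c ^ 2 + 2 / c ^ 3))
      (u ^ 2 * exp (-(c * u))) u := by
  have hexp := ((hasDerivAt_id' u).const_mul c).neg.exp
  have hpoly := (((hasDerivAt_pow 2 u).div_const c).add
      (((hasDerivAt_id' u).const_mul 2).div_const (c ^ 2))).add_const (2 / c ^ 3)
  refine (hexp.neg.mul hpoly).congr_deriv ?_
  simp only [Pi.add_apply, Pi.neg_apply]
  field_simp
  ring

theorem integral_sq_mul_exp_neg {c : ℝ} (hc : c ≠ 0) (t : ℝ) :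
    ∫ u in (0 : ℝ)..t, u ^ 2 * exp (-(c * u)) =
      2 / c ^ 3 * (1 - exp (-(c * t)) * (1 + c * t + (c * t) ^ 2 / 2)) := by
  rw [intervalIntegral.integral_eq_sub_of_hasDerivAt
    (fun u _ => hasDerivAt_sq_mul_exp_neg_antideriv hc u)
    ((by fun_prop : Continuous fun u => u ^ 2 * exp (-(c * u))).intervalIntegrable 0 t)]
  field_simp
  simp only [mul_zero, neg_zero, exp_zero, zero_add, zero_mul, one_mul, sub_neg_eq_add]
  ring

end Real

theorem lyapunov_integral_first_entry_general
    (Γ : ℝ) (hΓ : 0 < Γ)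
    (E : ℝ → Matrix (Fin 2) (Fin 2) ℝ)
    (hE : ∀ t : ℝ, E t = Real.exp (-2 * t / Γ) •
      !![1 + 2 / Γ * t, 4 / Γ ^ 2 * t; -t, 1 - 2 / Γ * t])
    (B : Matrix (Fin 2) (Fin 2) ℝ)
    (hB : B = !![0, 0; 0, Real.sqrt (2 * Γ)])
    (Sig : ℝ → Matrix (Fin 2) (Fin 2) ℝ)
    (hSig : ∀ (t : ℝ) (i j : Fin 2),
      Sig t i j = ∫ s in (0 : ℝ)..t, (E (t - s) * B * Bᵀ * (E (t - s))ᵀ) i j)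
    (t : ℝ) :
    Sig t 0 0 =
      (Real.exp (4 * t / Γ) - 1 - 4 * t / Γ - 8 * t ^ 2 / Γ ^ 2) *
        Real.exp (-(4 * t) / Γ) := by
  have hintegrand (u : ℝ) : (E u * B * Bᵀ * (E u)ᵀ) 0 0
      = 32 / Γ ^ 3 * (u ^ 2 * Real.exp (-(4 / Γ * u))) := by
    rw [hB, Matrix.mul_mul_transpose_mul_transpose_apply_zero_zero, hE]
    have hsq : Real.exp (-2 * u / Γ) ^ 2 = Real.exp (-(4 / Γ * u)) := by
      rw [← Real.exp_nat_mul]; congr 1; push_cast; ring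
    simp only [Matrix.smul_apply, Matrix.of_apply, Matrix.cons_val', Matrix.cons_val_zero,
      Matrix.cons_val_one, Matrix.empty_val', Matrix.cons_val_fin_one, smul_eq_mul]
    rw [mul_pow, mul_pow, Real.sq_sqrt (by positivity), hsq]
    field_simp
    ring
  rw [hSig, intervalIntegral.integral_congr (fun s _ => hintegrand (t - s)),
    intervalIntegral.integral_comp_sub_left
      (fun u => 32 / Γ ^ 3 * (u ^ 2 * Real.exp (-(4 / Γ * u)))),
    sub_self, sub_zero, intervalIntegral.integral_const_mul,
    Real.integral_sq_mul_exp_neg (by positivity)]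
  rw [show -(4 / Γ * t) = -(4 * t / Γ) by ring, neg_div, Real.exp_neg]
  field_simp
  ring

/-- With `e^{At} = e^{-2t/Γ}[[1+2Γ⁻¹t, 4Γ⁻²t],[-t, 1-2Γ⁻¹t]]` and
`B = [[0,0],[0,√(2Γ)]]`, the `(1,1)` entry of
`Σ_t = ∫₀ᵗ e^{A(t-s)} B Bᵀ (e^{A(t-s)})ᵀ ds` equals
`(e^{4t/Γ} - 1 - 4tΓ⁻¹ - 8t²Γ⁻²) e^{-4t/Γ}`. -/
theorem lyapunov_integral_first_entry
    (Γ : ℝ) (hΓ : 0 < Γ)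
    (E : ℝ → Matrix (Fin 2) (Fin 2) ℝ)
    (hE : ∀ t : ℝ, E t = Real.exp (-2 * t / Γ) •
      !![1 + 2 / Γ * t, 4 / Γ ^ 2 * t; -t, 1 - 2 / Γ * t])
    (B : Matrix (Fin 2) (Fin 2) ℝ)
    (hB : B = !![0, 0; 0, Real.sqrt (2 * Γ)])
    (Sig : ℝ → Matrix (Fin 2) (Fin 2) ℝ)
    (hSig : ∀ (t : ℝ) (i j : Fin 2),
      Sig t i j = ∫ s in (0 : ℝ)..t, (E (t - s) * B * Bᵀ * (E (t - s))ᵀ) i j)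
    (t : ℝ) (ht : 0 ≤ t) :
    Sig t 0 0 =
      (Real.exp (4 * t / Γ) - 1 - 4 * t / Γ - 8 * t ^ 2 / Γ ^ 2) *
        Real.exp (-(4 * t) / Γ) :=
  lyapunov_integral_first_entry_general Γ hΓ E hE B hB Sig hSig t
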